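/- arXiv:1808.10615 — 3 statements merged into one kernel-verified Lean document; each statement's English description precedes it below -/
import Mathlib

section
/- Let L be a real inner product space. For any vectors a, b, m, n in L with ⟨m, n⟩ = 0, the inequality ‖a − m‖²·‖b‖² + ‖a‖²·‖b − n‖² + 2·‖a − m‖·‖b − n‖·√(‖a‖²·‖b‖² − ⟨a, b⟩²) ≥ ⟨a, b⟩² holds. -/
/-!
Put `u = n / ‖n‖`, `α = ⟪a, u⟫`, `γ = ⟪b, u⟫`, `w = b - γ u`, `δ = ‖w‖` and `p = ⟪a, w⟫`.
The left-hand side is increasing in `‖a - m‖` and `‖b - n‖`, and these are bounded below by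
`|α|` (as `m ⊥ u`) and by `δ` (the distance from `b` to the line `ℝ u`). Now `⟪a, b⟫ = αγ + p`,
`‖b‖² = γ² + δ²`, and Bessel's inequality for the orthogonal pair `u, w` reads
`α²δ² + p² ≤ ‖a‖²δ²`. Multiplied by `‖b‖²` it becomes `|αδ² - pγ| ≤ δ s`, where `s` is the
square root in the statement, and then
`(αγ + p)² = α²‖b‖² + ‖a‖²δ² - (‖a‖²δ² - α²δ² - p²) - 2α(αδ² - pγ) ≤ α²‖b‖² + ‖a‖²δ² + 2|α|δ s`.
-/

open scoped RealInnerProductSpace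

lemma abs_mul_sq_sub_mul_le_mul_sqrt {α γ δ p A : ℝ} (hδ : 0 ≤ δ)
    (hA : α ^ 2 * δ ^ 2 + p ^ 2 ≤ A * δ ^ 2) :
    |α * δ ^ 2 - p * γ| ≤ δ * √(A * (γ ^ 2 + δ ^ 2) - (α * γ + p) ^ 2) := by
  calc |α * δ ^ 2 - p * γ| ≤ √(δ ^ 2 * (A * (γ ^ 2 + δ ^ 2) - (α * γ + p) ^ 2)) :=
        Real.abs_le_sqrt (by linear_combination (γ ^ 2 + δ ^ 2) * hA)
    _ = δ * √(A * (γ ^ 2 + δ ^ 2) - (α * γ + p) ^ 2) := by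
        rw [Real.sqrt_mul (sq_nonneg δ), Real.sqrt_sq hδ]

lemma mul_add_sq_le_of_bessel {α γ δ p A : ℝ} (hδ : 0 ≤ δ)
    (hA : α ^ 2 * δ ^ 2 + p ^ 2 ≤ A * δ ^ 2) :
    (α * γ + p) ^ 2 ≤ |α| ^ 2 * (γ ^ 2 + δ ^ 2) + A * δ ^ 2 +
      2 * |α| * δ * √(A * (γ ^ 2 + δ ^ 2) - (α * γ + p) ^ 2) := by
  have hcross : -(α * (α * δ ^ 2 - p * γ)) ≤
      |α| * (δ * √(A * (γ ^ 2 + δ ^ 2) - (α * γ + p) ^ 2)) :=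
    (neg_le_abs _).trans <| abs_mul α _ ▸
      mul_le_mul_of_nonneg_left (abs_mul_sq_sub_mul_le_mul_sqrt hδ hA) (abs_nonneg α)
  rw [sq_abs]
  linear_combination hA + 2 * hcross

section

variable {E : Type*} [NormedAddCommGroup E] [InnerProductSpace ℝ E]

lemma inner_sq_mul_norm_sq_add_inner_sq_mul_norm_sq_le (a : E) {x y : E} (hxy : ⟪x, y⟫ = 0) :
    ⟪a, x⟫ ^ 2 * ‖y‖ ^ 2 + ⟪a, y⟫ ^ 2 * ‖x‖ ^ 2 ≤ ‖a‖ ^ 2 * ‖x‖ ^ 2 * ‖y‖ ^ 2 := by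
  set S := ⟪a, x⟫ ^ 2 * ‖y‖ ^ 2 + ⟪a, y⟫ ^ 2 * ‖x‖ ^ 2
  -- a multiple of the projection of `a` onto `span {x, y}`; Cauchy–Schwarz for `a, v` is Bessel
  set v := (⟪a, x⟫ * ‖y‖ ^ 2) • x + (⟪a, y⟫ * ‖x‖ ^ 2) • y
  have hav : ⟪a, v⟫ = S := by
    simp only [v, S, inner_add_right, real_inner_smul_right]
    ring
  have hv : ‖v‖ ^ 2 = ‖x‖ ^ 2 * ‖y‖ ^ 2 * S := by
    rw [← real_inner_self_eq_norm_sq]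
    simp only [v, S, inner_add_left, inner_add_right, real_inner_smul_left, real_inner_smul_right,
      hxy, real_inner_comm x y, real_inner_self_eq_norm_sq, norm_smul, mul_pow, Real.norm_eq_abs,
      sq_abs]
    ring
  have hcs : S ^ 2 ≤ ‖a‖ ^ 2 * (‖x‖ ^ 2 * ‖y‖ ^ 2 * S) := by
    simpa [sq_abs, mul_pow, hav, hv] using
      pow_le_pow_left₀ (abs_nonneg _) (abs_real_inner_le_norm a v) 2
  nlinarith [show 0 ≤ S by positivity, show 0 ≤ ‖a‖ ^ 2 * ‖x‖ ^ 2 * ‖y‖ ^ 2 by positivity]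

lemma inner_sub_inner_smul_eq_zero {u : E} (hu : ‖u‖ = 1) (b : E) :
    ⟪u, b - ⟪b, u⟫ • u⟫ = 0 := by
  rw [inner_sub_right, real_inner_smul_right, real_inner_self_eq_norm_sq, hu, real_inner_comm]
  ring

lemma norm_sub_smul_sq {u : E} (hu : ‖u‖ = 1) (b : E) (c : ℝ) :
    ‖b - c • u‖ ^ 2 = ‖b - ⟪b, u⟫ • u‖ ^ 2 + (⟪b, u⟫ - c) ^ 2 := by
  have horth : ⟪b - ⟪b, u⟫ • u, (⟪b, u⟫ - c) • u⟫ = 0 := by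
    rw [real_inner_smul_right, real_inner_comm u (b - _), inner_sub_inner_smul_eq_zero hu,
      mul_zero]
  rw [show b - c • u = (b - ⟪b, u⟫ • u) + (⟪b, u⟫ - c) • u by rw [sub_smul]; abel,
    norm_add_sq_real, horth, norm_smul, hu, Real.norm_eq_abs, mul_one, sq_abs]
  ring

lemma norm_sub_inner_smul_le {u : E} (hu : ‖u‖ = 1) (b : E) (c : ℝ) :
    ‖b - ⟪b, u⟫ • u‖ ≤ ‖b - c • u‖ := by
  refine le_of_pow_le_pow_left₀ two_ne_zero (norm_nonneg _) ?_
  rw [norm_sub_smul_sq hu b c]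
  exact le_add_of_nonneg_right (sq_nonneg _)

noncomputable def branciardBound (a b : E) (x y : ℝ) : ℝ :=
  x ^ 2 * ‖b‖ ^ 2 + ‖a‖ ^ 2 * y ^ 2 + 2 * x * y * √(‖a‖ ^ 2 * ‖b‖ ^ 2 - ⟪a, b⟫ ^ 2)

lemma branciardBound_mono (a b : E) {x x' y y' : ℝ} (hx : 0 ≤ x) (hy : 0 ≤ y) (hxx' : x ≤ x')
    (hyy' : y ≤ y') : branciardBound a b x y ≤ branciardBound a b x' y' := by
  unfold branciardBound
  gcongr
  linarith

lemma inner_sq_le_branciardBound (a b : E) {u : E} (hu : ‖u‖ = 1) :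
    ⟪a, b⟫ ^ 2 ≤ branciardBound a b |⟪a, u⟫| ‖b - ⟪b, u⟫ • u‖ := by
  set w := b - ⟪b, u⟫ • u
  have hb : ‖b‖ ^ 2 = ⟪b, u⟫ ^ 2 + ‖w‖ ^ 2 := by
    simpa [add_comm] using norm_sub_smul_sq hu b 0
  have hab : ⟪a, b⟫ = ⟪a, u⟫ * ⟪b, u⟫ + ⟪a, w⟫ := by
    simp only [w, inner_sub_right, real_inner_smul_right]
    ring
  have hbessel : ⟪a, u⟫ ^ 2 * ‖w‖ ^ 2 + ⟪a, w⟫ ^ 2 ≤ ‖a‖ ^ 2 * ‖w‖ ^ 2 := by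
    simpa [hu] using
      inner_sq_mul_norm_sq_add_inner_sq_mul_norm_sq_le a (inner_sub_inner_smul_eq_zero hu b)
  unfold branciardBound
  rw [hb, hab]
  exact mul_add_sq_le_of_bessel (norm_nonneg w) hbessel

end

/-- Branciard's geometric inequality. -/
theorem branciard_geometric_inequality
    {L : Type*} [NormedAddCommGroup L] [InnerProductSpace ℝ L]
    (a b m n : L) (hmn : (inner ℝ m n : ℝ) = 0) :
    ‖a - m‖ ^ 2 * ‖b‖ ^ 2 + ‖a‖ ^ 2 * ‖b - n‖ ^ 2 +
      2 * ‖a - m‖ * ‖b - n‖ * Real.sqrt (‖a‖ ^ 2 * ‖b‖ ^ 2 - (inner ℝ a b : ℝ) ^ 2)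
      ≥ (inner ℝ a b : ℝ) ^ 2 := by
  obtain rfl | hn := eq_or_ne n 0
  · calc ⟪a, b⟫ ^ 2 ≤ branciardBound a b 0 ‖b‖ := by
          simpa [branciardBound, mul_pow] using
            pow_le_pow_left₀ (abs_nonneg _) (abs_real_inner_le_norm a b) 2
      _ ≤ branciardBound a b ‖a - m‖ ‖b - 0‖ :=
          branciardBound_mono a b le_rfl (norm_nonneg b) (norm_nonneg _) (by rw [sub_zero])
  set u := ‖n‖⁻¹ • n
  have hu : ‖u‖ = 1 := norm_smul_inv_norm hn
  have hα : |⟪a, u⟫| ≤ ‖a - m‖ := by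
    have hmu : ⟪m, u⟫ = 0 := by rw [real_inner_smul_right, hmn, mul_zero]
    simpa [inner_sub_left, hmu, hu] using abs_real_inner_le_norm (a - m) u
  have hδ : ‖b - ⟪b, u⟫ • u‖ ≤ ‖b - n‖ := by
    simpa [u, smul_smul, hn] using norm_sub_inner_smul_le hu b ‖n‖
  calc ⟪a, b⟫ ^ 2 ≤ branciardBound a b |⟪a, u⟫| ‖b - ⟪b, u⟫ • u‖ :=
        inner_sq_le_branciardBound a b hu
    _ ≤ branciardBound a b ‖a - m‖ ‖b - n‖ :=
        branciardBound_mono a b (abs_nonneg _) (norm_nonneg _) hα hδ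
end

section
/- Let L be a real inner product space, let a, b, m, n ∈ L satisfy ⟨m, n⟩ = 0, and let ε, η, α, β be real numbers with ε ≥ ‖a − m‖, η ≥ ‖b − n‖, α ≥ ‖a‖, and β ≥ ‖b‖. Then ε²·β² + α²·η² + 2·ε·η·√(α²·β² − ⟨a, b⟩²) ≥ ⟨a, b⟩². -/
/-!
Let `θ = ∠(a, b)` and let `φ`, `ψ` be the angles `∠(a, m)`, `∠(b, n)` capped at `π / 2`. The
spherical triangle inequality along `m, a, b, n` and along `m, a, -b, -n`, with `∠(m, ±n) = π / 2`,
gives `|θ - π / 2| ≤ φ + ψ`. As `‖a - m‖ ≥ ‖a‖ sin φ`, `‖b - n‖ ≥ ‖b‖ sin ψ`,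
`⟪a, b⟫ = ‖a‖ ‖b‖ cos θ` and `√(‖a‖² ‖b‖² - ⟪a, b⟫²) = ‖a‖ ‖b‖ sin θ`, the inequality reduces to
`cos² θ ≤ sin² φ + sin² ψ + 2 sin φ sin ψ sin θ`, which for `φ + ψ ≤ π / 2` is
`|cos θ| ≤ sin (φ + ψ)` combined with `cos (φ + ψ) ≤ sin θ`.
-/

open Real InnerProductGeometry RealInnerProductSpace

theorem cos_sq_le_of_abs_sub_pi_div_two_le {φ ψ θ : ℝ} (hφ₀ : 0 ≤ φ) (hφ : φ ≤ π / 2)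
    (hψ₀ : 0 ≤ ψ) (hψ : ψ ≤ π / 2) (hθ₀ : 0 ≤ θ) (hθ : θ ≤ π) (h : |θ - π / 2| ≤ φ + ψ) :
    cos θ ^ 2 ≤ sin φ ^ 2 + sin ψ ^ 2 + 2 * sin φ * sin ψ * sin θ := by
  have hsφ : 0 ≤ sin φ := sin_nonneg_of_nonneg_of_le_pi hφ₀ (by linarith)
  have hsψ : 0 ≤ sin ψ := sin_nonneg_of_nonneg_of_le_pi hψ₀ (by linarith)
  have hsθ : 0 ≤ sin θ := sin_nonneg_of_nonneg_of_le_pi hθ₀ hθ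
  obtain ⟨hθ_le, hle_θ⟩ := abs_sub_le_iff.mp h
  rcases le_or_gt (π / 2) (φ + ψ) with hσ | hσ
  · have hcos_le : cos φ ≤ sin ψ := by
      rw [← sin_pi_div_two_sub]
      exact sin_le_sin_of_le_of_le_pi_div_two (by linarith) hψ (by linarith)
    have hcφ : 0 ≤ cos φ := cos_nonneg_of_mem_Icc ⟨by linarith, hφ⟩
    nlinarith [sin_sq_add_cos_sq φ, sin_sq_add_cos_sq θ, mul_nonneg (mul_nonneg hsφ hsψ) hsθ]
  · have hcos : cos θ ^ 2 ≤ sin (φ + ψ) ^ 2 := by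
      rw [← cos_pi_div_two_sub]
      apply sq_le_sq'
      · rw [neg_le, ← cos_pi_sub]
        exact cos_le_cos_of_nonneg_of_le_pi (by linarith) (by linarith) (by linarith)
      · exact cos_le_cos_of_nonneg_of_le_pi (by linarith) hθ (by linarith)
    have hsin : cos (φ + ψ) ≤ sin θ := by
      refine (pow_le_pow_iff_left₀ (cos_nonneg_of_mem_Icc ⟨by linarith, hσ.le⟩) hsθ
        two_ne_zero).mp ?_
      linarith [sin_sq_add_cos_sq θ, sin_sq_add_cos_sq (φ + ψ)]
    calc cos θ ^ 2 ≤ sin (φ + ψ) ^ 2 := hcos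
      _ = sin φ ^ 2 + sin ψ ^ 2 + 2 * sin φ * sin ψ * cos (φ + ψ) := by
        rw [sin_add, cos_add]
        linear_combination sin φ ^ 2 * sin_sq_add_cos_sq ψ + sin ψ ^ 2 * sin_sq_add_cos_sq φ
      _ ≤ sin φ ^ 2 + sin ψ ^ 2 + 2 * sin φ * sin ψ * sin θ := by gcongr

section

variable {V : Type*} [NormedAddCommGroup V] [InnerProductSpace ℝ V]

theorem norm_mul_sin_angle_le_norm_sub (x y : V) : ‖x‖ * sin (angle x y) ≤ ‖x - y‖ := by
  refine (pow_le_pow_iff_left₀ (mul_nonneg (norm_nonneg x) (sin_angle_nonneg x y))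
    (norm_nonneg _) two_ne_zero).mp ?_
  rw [norm_sub_sq_real, ← cos_angle_mul_norm_mul_norm]
  nlinarith [sin_sq_add_cos_sq (angle x y), sq_nonneg (‖y‖ - ‖x‖ * cos (angle x y))]

theorem norm_mul_sin_min_angle_pi_div_two_le_norm_sub (x y : V) :
    ‖x‖ * sin (min (angle x y) (π / 2)) ≤ ‖x - y‖ := by
  rcases le_total (angle x y) (π / 2) with h | h
  · rw [min_eq_left h]
    exact norm_mul_sin_angle_le_norm_sub x y
  · rw [min_eq_right h, sin_pi_div_two, mul_one]
    have hcos : cos (angle x y) ≤ 0 :=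
      cos_nonpos_of_pi_div_two_le_of_le h (by linarith [angle_le_pi x y])
    refine (pow_le_pow_iff_left₀ (norm_nonneg x) (norm_nonneg _) two_ne_zero).mp ?_
    rw [norm_sub_sq_real, ← cos_angle_mul_norm_mul_norm]
    nlinarith [mul_nonneg (norm_nonneg x) (norm_nonneg y)]

theorem abs_angle_sub_pi_div_two_le_of_inner_eq_zero {a b m n : V} (hmn : ⟪m, n⟫ = 0) :
    |angle a b - π / 2| ≤ min (angle a m) (π / 2) + min (angle b n) (π / 2) := by
  have hright : angle m n = π / 2 := (inner_eq_zero_iff_angle_eq_pi_div_two m n).mp hmn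
  have hman := angle_le_angle_add_angle m a n
  have habn := angle_le_angle_add_angle a b n
  have hman' := angle_le_angle_add_angle m a (-n)
  have habn' := angle_le_angle_add_angle a (-b) (-n)
  rw [angle_neg_neg] at habn'
  simp only [angle_neg_right, hright, angle_comm m a] at hman hman' habn'
  have := angle_nonneg a m
  have := angle_nonneg b n
  have := angle_nonneg a b
  have := angle_le_pi a b
  refine abs_sub_le_iff.mpr ⟨?_, ?_⟩ <;>
    rcases min_cases (angle a m) (π / 2) with ⟨hm, -⟩ | ⟨hm, -⟩ <;>
    rcases min_cases (angle b n) (π / 2) with ⟨hn, -⟩ | ⟨hn, -⟩ <;> linarith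

theorem norm_mul_norm_mul_sin_angle_le_sqrt {x y : V} {α β : ℝ} (hα : ‖x‖ ≤ α) (hβ : ‖y‖ ≤ β) :
    ‖x‖ * ‖y‖ * sin (angle x y) ≤ √(α ^ 2 * β ^ 2 - ⟪x, y⟫ ^ 2) := by
  rw [mul_comm, sin_angle_mul_norm_mul_norm, real_inner_self_eq_norm_sq,
    real_inner_self_eq_norm_sq, ← sq]
  gcongr

end

/-- Branciard's geometric inequality with upper bounds on the norms. -/
theorem branciard_geometric_inequality_bounds
    {L : Type*} [NormedAddCommGroup L] [InnerProductSpace ℝ L]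
    (a b m n : L) (hmn : (inner ℝ m n : ℝ) = 0)
    (ε η α β : ℝ)
    (hε : ε ≥ ‖a - m‖) (hη : η ≥ ‖b - n‖) (hα : α ≥ ‖a‖) (hβ : β ≥ ‖b‖) :
    ε ^ 2 * β ^ 2 + α ^ 2 * η ^ 2 +
      2 * ε * η * Real.sqrt (α ^ 2 * β ^ 2 - (inner ℝ a b : ℝ) ^ 2)
      ≥ (inner ℝ a b : ℝ) ^ 2 := by
  set φ := min (angle a m) (π / 2)
  set ψ := min (angle b n) (π / 2)
  have hφ : 0 ≤ φ ∧ φ ≤ π / 2 :=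
    ⟨le_min (angle_nonneg a m) pi_div_two_pos.le, min_le_right _ _⟩
  have hψ : 0 ≤ ψ ∧ ψ ≤ π / 2 :=
    ⟨le_min (angle_nonneg b n) pi_div_two_pos.le, min_le_right _ _⟩
  have hcos := cos_sq_le_of_abs_sub_pi_div_two_le hφ.1 hφ.2 hψ.1 hψ.2 (angle_nonneg a b)
    (angle_le_pi a b) (abs_angle_sub_pi_div_two_le_of_inner_eq_zero hmn)
  have haφ : ‖a‖ * sin φ ≤ ε := (norm_mul_sin_min_angle_pi_div_two_le_norm_sub a m).trans hε
  have hbψ : ‖b‖ * sin ψ ≤ η := (norm_mul_sin_min_angle_pi_div_two_le_norm_sub b n).trans hη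
  have hsin := norm_mul_norm_mul_sin_angle_le_sqrt hα hβ
  have : 0 ≤ sin φ := sin_nonneg_of_nonneg_of_le_pi hφ.1 (by linarith [pi_pos])
  have : 0 ≤ sin ψ := sin_nonneg_of_nonneg_of_le_pi hψ.1 (by linarith [pi_pos])
  have : 0 ≤ sin (angle a b) := sin_angle_nonneg a b
  have : 0 ≤ ε := (norm_nonneg _).trans hε
  have : 0 ≤ η := (norm_nonneg _).trans hη
  calc ⟪a, b⟫ ^ 2 = (‖a‖ * ‖b‖) ^ 2 * cos (angle a b) ^ 2 := by
        rw [← cos_angle_mul_norm_mul_norm]; ring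
    _ ≤ (‖a‖ * ‖b‖) ^ 2 * (sin φ ^ 2 + sin ψ ^ 2 + 2 * sin φ * sin ψ * sin (angle a b)) := by
        gcongr
    _ = (‖a‖ * sin φ) ^ 2 * ‖b‖ ^ 2 + ‖a‖ ^ 2 * (‖b‖ * sin ψ) ^ 2 +
          2 * (‖a‖ * sin φ) * (‖b‖ * sin ψ) * (‖a‖ * ‖b‖ * sin (angle a b)) := by ring
    _ ≤ ε ^ 2 * β ^ 2 + α ^ 2 * η ^ 2 + 2 * ε * η * √(α ^ 2 * β ^ 2 - ⟪a, b⟫ ^ 2) := by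
        gcongr
end

section
/- Let ρ be an n×n complex positive semidefinite matrix with trace 1 and let A, B be n×n Hermitian matrices. Then (1/2)·Tr√(XᴴX) ≤ σ(A;ρ)·σ(B;ρ), where X = √ρ·(−i(AB − BA))·√ρ, √ρ is the positive semidefinite square root of ρ, and σ(A;ρ) = √(Tr[ρA²] − (Tr[ρA])²), σ(B;ρ) = √(Tr[ρB²] − (Tr[ρB])²). In other words, D_{A,B,ρ} ≤ σ(A;ρ)·σ(B;ρ). -/
open Matrix
open scoped ComplexOrder

/-- The positive semidefinite square root of a positive semidefinite matrix
(the definition `Matrix.PosSemidef.sqrt` of the older Mathlib, removed since). -/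
noncomputable def Matrix.PosSemidef.sqrt {n : Type*} [Fintype n] [DecidableEq n]
    {A : Matrix n n ℂ} (hA : A.PosSemidef) : Matrix n n ℂ :=
  hA.1.eigenvectorUnitary.1 * diagonal ((↑) ∘ (Real.sqrt ·) ∘ hA.1.eigenvalues) *
    (star hA.1.eigenvectorUnitary : Matrix n n ℂ)

/-- The trace norm `Tr√(XᴴX)` of a complex square matrix. -/
noncomputable def traceNorm {k : Type*} [Fintype k] [DecidableEq k]
    (X : Matrix k k ℂ) : ℝ :=
  ((Matrix.posSemidef_conjTranspose_mul_self X).sqrt).trace.re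

/-
Write `a = Tr ρA`, `b = Tr ρB`, `S = √ρ`, `P = (A - a)S` and `Q = (B - b)S`. Shifting by scalars
does not change the commutator, so `X := S(-i[A,B])S = -i(PᴴQ - QᴴP)`, a Hermitian matrix, and
`Tr(PᴴP) = σ(A)²`, `Tr(QᴴQ) = σ(B)²`. In an orthonormal eigenbasis `(vᵢ)` of `X` the eigenvalues
are `λᵢ = 2 Im⟨Pvᵢ, Qvᵢ⟩`, so Cauchy–Schwarz twice gives
`Tr|X| = ∑ |λᵢ| ≤ 2 ∑ ‖Pvᵢ‖‖Qvᵢ‖ ≤ 2 (∑ ‖Pvᵢ‖²)^½ (∑ ‖Qvᵢ‖²)^½ = 2 σ(A) σ(B)`.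
-/

lemma commutator_sub_smul_one {R M : Type*} [CommSemiring R] [Ring M] [Algebra R M]
    (x y : M) (a b : R) :
    (x - a • 1) * (y - b • 1) - (y - b • 1) * (x - a • 1) = x * y - y * x := by
  simp only [sub_mul, mul_sub, smul_mul_assoc, mul_smul_comm, one_mul, mul_one, smul_sub,
    smul_smul, mul_comm a b]
  abel

namespace Matrix

variable {k : Type*}

lemma IsHermitian.sub_smul_one [DecidableEq k] {A : Matrix k k ℂ} (hA : A.IsHermitian) (a : ℝ) :
    (A - a • 1).IsHermitian :=
  hA.sub (isHermitian_one.smul (IsSelfAdjoint.all a))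

variable [Fintype k]

section FunctionalCalculus

open scoped MatrixOrder

variable [DecidableEq k]

lemma PosSemidef.sqrt_eq_cfcSqrt {A : Matrix k k ℂ} (hA : A.PosSemidef) :
    hA.sqrt = CFC.sqrt A := by
  rw [CFC.sqrt_eq_cfc, cfc_nnreal_eq_real _ A, hA.1.cfc_eq, IsHermitian.cfc,
    Unitary.conjStarAlgAut_apply, PosSemidef.sqrt]
  congr 3
  funext i
  simp [Real.coe_sqrt, Real.coe_toNNReal', max_eq_left (hA.eigenvalues_nonneg i)]

lemma PosSemidef.isHermitian_sqrt {A : Matrix k k ℂ} (hA : A.PosSemidef) :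
    hA.sqrt.IsHermitian := by
  rw [hA.sqrt_eq_cfcSqrt]
  exact (nonneg_iff_posSemidef.mp (CFC.sqrt_nonneg A)).1

lemma PosSemidef.sqrt_mul_self {A : Matrix k k ℂ} (hA : A.PosSemidef) :
    hA.sqrt * hA.sqrt = A := by
  rw [hA.sqrt_eq_cfcSqrt]
  exact CFC.sqrt_mul_sqrt_self A hA.nonneg

lemma traceNorm_eq_re_trace_abs (X : Matrix k k ℂ) : traceNorm X = (CFC.abs X).trace.re := by
  rw [traceNorm, PosSemidef.sqrt_eq_cfcSqrt, CFC.abs, star_eq_conjTranspose]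

lemma IsHermitian.traceNorm_eq_sum_abs_eigenvalues {X : Matrix k k ℂ} (hX : X.IsHermitian) :
    traceNorm X = ∑ i, |hX.eigenvalues i| := by
  rw [traceNorm_eq_re_trace_abs, CFC.abs_eq_cfc_norm X hX.isSelfAdjoint, hX.cfc_eq,
    IsHermitian.cfc, Unitary.conjStarAlgAut_apply, trace_mul_cycle, Unitary.coe_star_mul_self,
    one_mul, trace_diagonal]
  simp [Complex.re_sum]

end FunctionalCalculus

lemma trace_eq_sum_star_dotProduct_mulVec {ι : Type*} [Fintype ι] [DecidableEq k]
    (M : Matrix k k ℂ) (b : OrthonormalBasis ι ℂ (EuclideanSpace ℂ k)) :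
    M.trace = ∑ i, star ⇑(b i) ⬝ᵥ (M *ᵥ ⇑(b i)) := by
  rw [← trace_toLin_eq M (EuclideanSpace.basisFun k ℂ).toBasis,
    ← toEuclideanLin_eq_toLin_orthonormal, LinearMap.trace_eq_sum_inner _ b]
  simp [EuclideanSpace.inner_eq_star_dotProduct, dotProduct_comm]

lemma norm_star_dotProduct_le (v w : k → ℂ) :
    ‖star v ⬝ᵥ w‖ ≤ √(star v ⬝ᵥ v).re * √(star w ⬝ᵥ w).re := by
  have h := norm_inner_le_norm (𝕜 := ℂ) (WithLp.toLp 2 v) (WithLp.toLp 2 w)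
  rwa [norm_eq_sqrt_re_inner (𝕜 := ℂ) (WithLp.toLp 2 v),
    norm_eq_sqrt_re_inner (𝕜 := ℂ) (WithLp.toLp 2 w), EuclideanSpace.inner_toLp_toLp,
    EuclideanSpace.inner_toLp_toLp, EuclideanSpace.inner_toLp_toLp, dotProduct_comm w,
    dotProduct_comm v, dotProduct_comm w] at h

lemma star_dotProduct_conjTranspose_mul_mulVec (M N : Matrix k k ℂ) (u : k → ℂ) :
    star u ⬝ᵥ ((Mᴴ * N) *ᵥ u) = star (M *ᵥ u) ⬝ᵥ (N *ᵥ u) := by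
  rw [← mulVec_mulVec, dotProduct_mulVec, ← star_mulVec]

lemma isHermitian_neg_I_smul_sub (P Q : Matrix k k ℂ) :
    ((-Complex.I) • (Pᴴ * Q - Qᴴ * P)).IsHermitian := by
  rw [IsHermitian, conjTranspose_smul, conjTranspose_sub, conjTranspose_mul, conjTranspose_mul,
    conjTranspose_conjTranspose, conjTranspose_conjTranspose, ← neg_sub, smul_neg, ← neg_smul,
    star_neg, Complex.star_def, Complex.conj_I, neg_neg]

lemma re_star_dotProduct_neg_I_smul_sub_mulVec (P Q : Matrix k k ℂ) (u : k → ℂ) :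
    (star u ⬝ᵥ (((-Complex.I) • (Pᴴ * Q - Qᴴ * P)) *ᵥ u)).re =
      2 * (star (P *ᵥ u) ⬝ᵥ (Q *ᵥ u)).im := by
  rw [smul_mulVec, dotProduct_smul, sub_mulVec, dotProduct_sub,
    star_dotProduct_conjTranspose_mul_mulVec, star_dotProduct_conjTranspose_mul_mulVec,
    star_dotProduct (Q *ᵥ u)]
  simp only [RCLike.star_def, smul_eq_mul, neg_mul, Complex.neg_re, Complex.mul_re, Complex.I_re,
    Complex.sub_re, Complex.conj_re, sub_self, mul_zero, Complex.I_im, Complex.sub_im,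
    Complex.conj_im, sub_neg_eq_add, one_mul, zero_sub, neg_add_rev, neg_neg]
  ring

theorem traceNorm_neg_I_smul_sub_le [DecidableEq k] (P Q : Matrix k k ℂ) :
    traceNorm ((-Complex.I) • (Pᴴ * Q - Qᴴ * P)) ≤
      2 * (√(Pᴴ * P).trace.re * √(Qᴴ * Q).trace.re) := by
  have hX := isHermitian_neg_I_smul_sub P Q
  set v : k → k → ℂ := fun i ↦ ⇑(hX.eigenvectorBasis i)
  have normSq_nonneg (M : Matrix k k ℂ) (i : k) : 0 ≤ (star (M *ᵥ v i) ⬝ᵥ (M *ᵥ v i)).re :=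
    (Complex.nonneg_iff.mp (dotProduct_star_self_nonneg _)).1
  have sum_normSq (M : Matrix k k ℂ) :
      ∑ i, (star (M *ᵥ v i) ⬝ᵥ (M *ᵥ v i)).re = (Mᴴ * M).trace.re := by
    rw [trace_eq_sum_star_dotProduct_mulVec _ hX.eigenvectorBasis, Complex.re_sum]
    simp_rw [star_dotProduct_conjTranspose_mul_mulVec]
    rfl
  calc traceNorm _ = ∑ i, |hX.eigenvalues i| := hX.traceNorm_eq_sum_abs_eigenvalues
    _ = 2 * ∑ i, |(star (P *ᵥ v i) ⬝ᵥ (Q *ᵥ v i)).im| := by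
      simp_rw [hX.eigenvalues_eq, RCLike.re_to_complex, re_star_dotProduct_neg_I_smul_sub_mulVec,
        abs_mul, abs_two, Finset.mul_sum]
      rfl
    _ ≤ 2 * ∑ i, √(star (P *ᵥ v i) ⬝ᵥ (P *ᵥ v i)).re * √(star (Q *ᵥ v i) ⬝ᵥ (Q *ᵥ v i)).re := by
      gcongr with i
      exact (Complex.abs_im_le_norm _).trans (norm_star_dotProduct_le _ _)
    _ ≤ 2 * (√(Pᴴ * P).trace.re * √(Qᴴ * Q).trace.re) := by
      rw [← sum_normSq, ← sum_normSq]
      gcongr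
      exact Real.sum_sqrt_mul_sqrt_le _ (normSq_nonneg P) (normSq_nonneg Q)

lemma IsHermitian.mul_commutator_mul {S A B : Matrix k k ℂ} (hS : S.IsHermitian)
    (hA : A.IsHermitian) (hB : B.IsHermitian) :
    S * (A * B - B * A) * S = (A * S)ᴴ * (B * S) - (B * S)ᴴ * (A * S) := by
  rw [conjTranspose_mul, conjTranspose_mul, hA.eq, hB.eq, hS.eq]
  noncomm_ring

lemma re_trace_conjTranspose_mul_self_sub_expectation [DecidableEq k] {ρ S A : Matrix k k ℂ}
    (hS : S.IsHermitian) (hSS : S * S = ρ) (hρ : ρ.trace = 1) (hA : A.IsHermitian) :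
    (((A - (ρ * A).trace.re • 1) * S)ᴴ * ((A - (ρ * A).trace.re • 1) * S)).trace.re =
      (ρ * (A * A)).trace.re - (ρ * A).trace.re ^ 2 := by
  set a := (ρ * A).trace.re
  have hcycle : ((A - a • 1) * S)ᴴ * ((A - a • 1) * S) = S * ((A - a • 1) * (A - a • 1)) * S := by
    rw [conjTranspose_mul, (hA.sub_smul_one a).eq, hS.eq]
    noncomm_ring
  rw [hcycle, trace_mul_cycle, ← mul_assoc, hSS]
  simp only [sub_mul, mul_sub, smul_mul_assoc, mul_smul_comm, mul_one, smul_sub, smul_smul,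
    mul_assoc, trace_sub, trace_smul, hρ, Complex.sub_re, Complex.real_smul, Complex.mul_re,
    Complex.ofReal_re, Complex.ofReal_im, Complex.ofReal_mul, zero_mul, sub_zero, mul_zero]
  ring

end Matrix

/-- `D_{A,B,ρ} ≤ σ(A;ρ)·σ(B;ρ)`. -/
theorem D_le_sigma_mul_sigma {n : ℕ}
    (ρ A B : Matrix (Fin n) (Fin n) ℂ)
    (hρ : ρ.PosSemidef) (hρtr : ρ.trace = 1)
    (hA : A.IsHermitian) (hB : B.IsHermitian) :
    (1 / 2 : ℝ) * traceNorm (hρ.sqrt * ((-Complex.I) • (A * B - B * A)) * hρ.sqrt)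
      ≤ Real.sqrt (((ρ * (A * A)).trace).re - (((ρ * A).trace).re) ^ 2) *
        Real.sqrt (((ρ * (B * B)).trace).re - (((ρ * B).trace).re) ^ 2) := by
  set S := hρ.sqrt
  have hS : S.IsHermitian := hρ.isHermitian_sqrt
  set A' := A - (ρ * A).trace.re • 1
  set B' := B - (ρ * B).trace.re • 1
  have hX : S * ((-Complex.I) • (A * B - B * A)) * S =
      (-Complex.I) • ((A' * S)ᴴ * (B' * S) - (B' * S)ᴴ * (A' * S)) := by
    rw [mul_smul_comm, smul_mul_assoc,
      ← commutator_sub_smul_one A B (ρ * A).trace.re (ρ * B).trace.re,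
      hS.mul_commutator_mul (hA.sub_smul_one _) (hB.sub_smul_one _)]
  rw [hX, ← re_trace_conjTranspose_mul_self_sub_expectation hS hρ.sqrt_mul_self hρtr hA,
    ← re_trace_conjTranspose_mul_self_sub_expectation hS hρ.sqrt_mul_self hρtr hB]
  linarith [traceNorm_neg_I_smul_sub_le (A' * S) (B' * S)]
end
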